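/- Let X = (X₁,…,X_p) be a mean-zero random vector with covariance matrix Σ following the graph-dependent model with graph G. If A = (a_{ij}) ∈ ℝ^{p×p} is symmetric and a_{ij} = 0 whenever d_G(i,j) ≤ 2, then Var(XᵀAX) ≤ 2‖A‖²·tr(Σ²). -/

import Mathlib

open MeasureTheory ProbabilityTheory Matrix Filter
open scoped BigOperators

noncomputable def specNorm {p : ℕ} (A : Matrix (Fin p) (Fin p) ℝ) : ℝ :=
  ‖Matrix.toEuclideanCLM (𝕜 := ℝ) A‖

/-- Two vertex sets are adjacent if some `i ∈ I`, `j ∈ J` satisfy `i = j` or `i ~ j`. -/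
def SetsAdj {V : Type*} (G : SimpleGraph V) (I J : Set V) : Prop :=
  ∃ i ∈ I, ∃ j ∈ J, i = j ∨ G.Adj i j

/-- The graph-dependent model: coordinates indexed by non-adjacent vertex sets are independent. -/
def GraphDependent {Ω : Type*} [MeasurableSpace Ω] (P : Measure Ω) {p : ℕ}
    (G : SimpleGraph (Fin p)) (X : Fin p → Ω → ℝ) : Prop :=
  ∀ I J : Set (Fin p), ¬ SetsAdj G I J →
    IndepFun (fun ω (i : I) => X i ω) (fun ω (j : J) => X j ω) P

/-- `𝒱` is a d-dominating set for `G`. -/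
def IsDomSet {p : ℕ} (G : SimpleGraph (Fin p)) (d : ℕ) (𝒱 : Set (Fin p)) : Prop :=
  (∀ u, u ∉ 𝒱 → ∃ v ∈ 𝒱, G.Adj u v) ∧
  ∀ u, {v ∈ 𝒱 | G.edist u v ≤ 3}.ncard ≤ d

/-- A centered Gaussian random vector with covariance matrix `S`:
every linear functional is centered Gaussian with the appropriate variance. -/
def IsCenteredGaussianVec {Ω : Type*} [MeasurableSpace Ω] (P : Measure Ω) {p : ℕ}
    (z : Ω → Fin p → ℝ) (S : Matrix (Fin p) (Fin p) ℝ) : Prop :=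
  ∀ a : Fin p → ℝ,
    Measure.map (fun ω => a ⬝ᵥ z ω) P = gaussianReal 0 (a ⬝ᵥ S.mulVec a).toNNReal

/-!
Write `XᵀAX = ∑ A_ij X_i X_j`; only pairs with `d(i,j) ≥ 3` contribute. Independence across
non-adjacent vertex sets makes the mean `∑ A_ij Σ_ij` vanish, and makes the fourth moments of such
pairs factor exactly as for a Gaussian vector: `E[X_i X_j X_k X_l] = Σ_ik Σ_jl + Σ_il Σ_jk`.
Indeed, either some index is at distance `≥ 2` from the other three, so it splits off with mean
zero, or the indices form two close pairs at distance `≥ 2` from each other. Hence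
`Var(XᵀAX) = 2 tr((AΣ)²)`, and `tr((AΣ)²) ≤ ‖AΣ‖_F² ≤ ‖A‖² ‖Σ‖_F² = ‖A‖² tr(Σ²)` by Cauchy–Schwarz
and by applying `A` to the columns of `Σ`.
-/

namespace Matrix

variable {n : Type*} [Fintype n]

lemma dotProduct_mulVec_self_eq_sum (A : Matrix n n ℝ) (x : n → ℝ) :
    x ⬝ᵥ A *ᵥ x = ∑ i, ∑ j, A i j * (x i * x j) := by
  simp only [dotProduct, mulVec, Finset.mul_sum]
  exact Finset.sum_congr rfl fun i _ => Finset.sum_congr rfl fun j _ => by ring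

lemma sum_sq_mulVec_le_specNorm_sq {p : ℕ} (A : Matrix (Fin p) (Fin p) ℝ) (v : Fin p → ℝ) :
    ∑ i, (A *ᵥ v) i ^ 2 ≤ specNorm A ^ 2 * ∑ i, v i ^ 2 := by
  have h := (toEuclideanCLM (𝕜 := ℝ) A).le_opNorm (WithLp.toLp 2 v)
  have h2 := pow_le_pow_left₀ (norm_nonneg _) h 2
  rw [mul_pow, EuclideanSpace.norm_sq_eq, EuclideanSpace.norm_sq_eq] at h2
  simpa [specNorm, toEuclideanCLM_toLp, Real.norm_eq_abs, sq_abs] using h2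

lemma sum_sq_mul_le_specNorm_sq {p : ℕ} (A B : Matrix (Fin p) (Fin p) ℝ) :
    ∑ i, ∑ j, (A * B) i j ^ 2 ≤ specNorm A ^ 2 * ∑ i, ∑ j, B i j ^ 2 := by
  rw [Finset.sum_comm, Finset.sum_comm (f := fun i j => B i j ^ 2), Finset.mul_sum]
  exact Finset.sum_le_sum fun j _ => sum_sq_mulVec_le_specNorm_sq A fun k => B k j

lemma trace_mul_self_le_sum_sq (B : Matrix n n ℝ) :
    trace (B * B) ≤ ∑ i, ∑ j, B i j ^ 2 := by
  have hcs := Finset.sum_mul_sq_le_sq_mul_sq (Finset.univ : Finset (n × n))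
    (fun z => B z.1 z.2) (fun z => B z.2 z.1)
  have hswap : ∑ z : n × n, B z.2 z.1 ^ 2 = ∑ z : n × n, B z.1 z.2 ^ 2 :=
    Fintype.sum_equiv (Equiv.prodComm _ _) _ _ fun _ => rfl
  rw [hswap, ← sq] at hcs
  have : trace (B * B) = ∑ z : n × n, B z.1 z.2 * B z.2 z.1 := by
    simp [trace, mul_apply, Fintype.sum_prod_type]
  rw [this, ← Fintype.sum_prod_type']
  exact abs_le_of_sq_le_sq' hcs (Finset.sum_nonneg fun _ _ => sq_nonneg _) |>.2

lemma IsSymm.trace_mul_self_eq_sum_sq {S : Matrix n n ℝ} (hS : S.IsSymm) :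
    trace (S * S) = ∑ i, ∑ j, S i j ^ 2 := by
  simp [trace, mul_apply, sq, hS.apply]

lemma trace_sq_mul_le_specNorm_sq {p : ℕ} (A : Matrix (Fin p) (Fin p) ℝ)
    {S : Matrix (Fin p) (Fin p) ℝ} (hS : S.IsSymm) :
    trace ((A * S) ^ 2) ≤ specNorm A ^ 2 * trace (S ^ 2) := by
  rw [sq (A * S), sq S, hS.trace_mul_self_eq_sum_sq]
  exact (trace_mul_self_le_sum_sq _).trans (sum_sq_mul_le_specNorm_sq A S)

lemma IsSymm.sum_mul_mul_add_mul_eq_two_trace [DecidableEq n] {A S : Matrix n n ℝ}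
    (hA : A.IsSymm) (hS : S.IsSymm) :
    ∑ i, ∑ j, ∑ k, ∑ l, A i j * A k l * (S i k * S j l + S i l * S j k)
      = 2 * trace ((A * S) ^ 2) := by
  have htrace : trace ((A * S) ^ 2) = ∑ i, ∑ j, ∑ k, ∑ l, A i j * S j k * (A k l * S l i) := by
    simp only [sq, trace, diag, mul_apply, Finset.sum_mul, Finset.mul_sum]
    refine Finset.sum_congr rfl fun i _ => ?_
    exact (Finset.sum_congr rfl fun k _ => Finset.sum_comm).trans Finset.sum_comm
  have hfirst : ∑ i, ∑ j, ∑ k, ∑ l, A i j * A k l * (S i k * S j l) = trace ((A * S) ^ 2) := by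
    rw [htrace]
    refine Finset.sum_congr rfl fun i _ => Finset.sum_congr rfl fun j _ => ?_
    rw [Finset.sum_comm]
    refine Finset.sum_congr rfl fun k _ => Finset.sum_congr rfl fun l _ => ?_
    rw [hA.apply l k, hS.apply i l]
    ring
  have hsecond : ∑ i, ∑ j, ∑ k, ∑ l, A i j * A k l * (S i l * S j k) = trace ((A * S) ^ 2) := by
    rw [htrace]
    refine Finset.sum_congr rfl fun i _ => Finset.sum_congr rfl fun j _ =>
      Finset.sum_congr rfl fun k _ => Finset.sum_congr rfl fun l _ => ?_
    rw [hS.apply l i]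
    ring
  simp only [mul_add, Finset.sum_add_distrib, hfirst, hsecond]
  ring

end Matrix

lemma SimpleGraph.one_lt_edist_of_two_lt {V : Type*} {G : SimpleGraph V} {u v w : V}
    (huv : G.edist u v ≤ 1) (huw : 2 < G.edist u w) : 1 < G.edist v w := by
  by_contra! hvw
  exact huw.not_ge <| G.edist_triangle.trans <| (add_le_add huv hvw).trans_eq one_add_one_eq_two

namespace GraphDependent

variable {Ω : Type*} [MeasurableSpace Ω] {P : Measure Ω} {p : ℕ} {G : SimpleGraph (Fin p)}
  {X : Fin p → Ω → ℝ}

theorem indepFun_prod (hdep : GraphDependent P G X) {ι κ : Type*} [Fintype ι] [Fintype κ]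
    (u : ι → Fin p) (v : κ → Fin p) (hfar : ∀ a b, 1 < G.edist (u a) (v b)) :
    IndepFun (fun ω => ∏ a, X (u a) ω) (fun ω => ∏ b, X (v b) ω) P := by
  have hsep : ¬ SetsAdj G (Set.range u) (Set.range v) := by
    rintro ⟨_, ⟨a, rfl⟩, _, ⟨b, rfl⟩, hab⟩
    exact (hfar a b).not_ge (SimpleGraph.edist_le_one_iff_adj_or_eq.mpr hab.symm)
  exact (hdep _ _ hsep).comp (φ := fun x => ∏ a, x ⟨u a, a, rfl⟩)
    (ψ := fun y => ∏ b, y ⟨v b, b, rfl⟩)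
    (Finset.measurable_prod _ fun a _ => measurable_pi_apply _)
    (Finset.measurable_prod _ fun b _ => measurable_pi_apply _)

theorem integral_mul_prod_eq_zero (hdep : GraphDependent P G X)
    (hX : ∀ i, AEStronglyMeasurable (X i) P) (h0 : ∀ i, ∫ ω, X i ω ∂P = 0)
    {κ : Type*} [Fintype κ] {a : Fin p} {v : κ → Fin p}
    (hfar : ∀ b, 1 < G.edist a (v b)) : ∫ ω, X a ω * ∏ b, X (v b) ω ∂P = 0 := by
  have hind := hdep.indepFun_prod (fun _ : Unit => a) v fun _ b => hfar b
  simp only [Finset.univ_unique, Finset.prod_singleton] at hind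
  rw [hind.integral_fun_mul_eq_mul_integral (hX a)
    (Finset.aestronglyMeasurable_fun_prod _ fun b _ => hX (v b)), h0, zero_mul]

theorem integral_mul_eq_zero (hdep : GraphDependent P G X)
    (hX : ∀ i, AEStronglyMeasurable (X i) P) (h0 : ∀ i, ∫ ω, X i ω ∂P = 0)
    {a b : Fin p} (hab : 1 < G.edist a b) : ∫ ω, X a ω * X b ω ∂P = 0 := by
  simpa using hdep.integral_mul_prod_eq_zero hX h0 (v := fun _ : Unit => b) fun _ => hab

theorem integral_mul_mul_mul_eq_zero (hdep : GraphDependent P G X)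
    (hX : ∀ i, AEStronglyMeasurable (X i) P) (h0 : ∀ i, ∫ ω, X i ω ∂P = 0)
    {a b c d : Fin p} (hab : 1 < G.edist a b) (hac : 1 < G.edist a c)
    (had : 1 < G.edist a d) : ∫ ω, X a ω * (X b ω * X c ω * X d ω) ∂P = 0 := by
  simpa [Fin.prod_univ_three] using
    hdep.integral_mul_prod_eq_zero hX h0 (v := ![b, c, d]) (by simp [Fin.forall_fin_succ, *])

theorem integral_mul_mul_eq_mul_integral (hdep : GraphDependent P G X)
    (hX : ∀ i, AEStronglyMeasurable (X i) P) {a b c d : Fin p} (hac : 1 < G.edist a c)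
    (had : 1 < G.edist a d) (hbc : 1 < G.edist b c) (hbd : 1 < G.edist b d) :
    ∫ ω, X a ω * X b ω * (X c ω * X d ω) ∂P
      = (∫ ω, X a ω * X b ω ∂P) * ∫ ω, X c ω * X d ω ∂P := by
  have hind := hdep.indepFun_prod ![a, b] ![c, d] (by simp [Fin.forall_fin_two, *])
  simp only [Fin.prod_univ_two, Matrix.cons_val_zero, Matrix.cons_val_one] at hind
  exact hind.integral_fun_mul_eq_mul_integral ((hX a).mul (hX b)) ((hX c).mul (hX d))

theorem fourth_moment_eq_of_edist_le_one (hdep : GraphDependent P G X)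
    (hX : ∀ i, AEStronglyMeasurable (X i) P) (h0 : ∀ i, ∫ ω, X i ω ∂P = 0)
    {i j k l : Fin p} (hij : 2 < G.edist i j) (hkl : 2 < G.edist k l) (hik : G.edist i k ≤ 1) :
    ∫ ω, X i ω * X j ω * (X k ω * X l ω) ∂P
      = (∫ ω, X i ω * X k ω ∂P) * (∫ ω, X j ω * X l ω ∂P)
        + (∫ ω, X i ω * X l ω ∂P) * ∫ ω, X j ω * X k ω ∂P := by
  have hkj : 1 < G.edist k j := SimpleGraph.one_lt_edist_of_two_lt hik hij
  have hil : 1 < G.edist i l :=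
    SimpleGraph.one_lt_edist_of_two_lt (G.edist_comm.trans_le hik) hkl
  have hij' : 1 < G.edist i j := one_le_two.trans_lt hij
  have hkl' : 1 < G.edist k l := one_le_two.trans_lt hkl
  rw [hdep.integral_mul_eq_zero hX h0 hil, zero_mul, add_zero]
  rcases le_or_gt (G.edist j l) 1 with hjl | hjl
  · calc ∫ ω, X i ω * X j ω * (X k ω * X l ω) ∂P
          = ∫ ω, X i ω * X k ω * (X j ω * X l ω) ∂P := by congr 1; ext ω; ring
      _ = _ := hdep.integral_mul_mul_eq_mul_integral hX hij' hil hkj hkl'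
  · rw [hdep.integral_mul_eq_zero hX h0 hjl, mul_zero]
    calc ∫ ω, X i ω * X j ω * (X k ω * X l ω) ∂P
          = ∫ ω, X j ω * (X i ω * X k ω * X l ω) ∂P := by congr 1; ext ω; ring
      _ = 0 := hdep.integral_mul_mul_mul_eq_zero hX h0 (hij'.trans_eq G.edist_comm)
                (hkj.trans_eq G.edist_comm) hjl

theorem fourth_moment_eq (hdep : GraphDependent P G X)
    (hX : ∀ i, AEStronglyMeasurable (X i) P) (h0 : ∀ i, ∫ ω, X i ω ∂P = 0)
    {i j k l : Fin p} (hij : 2 < G.edist i j) (hkl : 2 < G.edist k l) :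
    ∫ ω, X i ω * X j ω * (X k ω * X l ω) ∂P
      = (∫ ω, X i ω * X k ω ∂P) * (∫ ω, X j ω * X l ω ∂P)
        + (∫ ω, X i ω * X l ω ∂P) * ∫ ω, X j ω * X k ω ∂P := by
  rcases le_or_gt (G.edist i k) 1 with hik | hik
  · exact hdep.fourth_moment_eq_of_edist_le_one hX h0 hij hkl hik
  rcases le_or_gt (G.edist i l) 1 with hil | hil
  · have hlk : 2 < G.edist l k := hkl.trans_eq G.edist_comm
    calc ∫ ω, X i ω * X j ω * (X k ω * X l ω) ∂P
          = ∫ ω, X i ω * X j ω * (X l ω * X k ω) ∂P := by simp only [mul_comm (X k _)]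
      _ = _ := hdep.fourth_moment_eq_of_edist_le_one hX h0 hij hlk hil
      _ = _ := add_comm _ _
  rw [hdep.integral_mul_eq_zero hX h0 hik, hdep.integral_mul_eq_zero hX h0 hil, zero_mul,
    zero_mul, add_zero]
  calc ∫ ω, X i ω * X j ω * (X k ω * X l ω) ∂P
        = ∫ ω, X i ω * (X j ω * X k ω * X l ω) ∂P := by congr 1; ext ω; ring
    _ = 0 := hdep.integral_mul_mul_mul_eq_zero hX h0 (one_le_two.trans_lt hij) hik hil

end GraphDependent

instance : ENNReal.HolderTriple 4 4 2 := ⟨by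
  rw [← two_mul, show (4 : ENNReal) = 2 * 2 by norm_num, ENNReal.mul_inv (by simp) (by simp),
    ← mul_assoc, ENNReal.mul_inv_cancel (by simp) (by simp), one_mul]⟩

section QuadraticForm

variable {Ω : Type*} [MeasurableSpace Ω] {P : Measure Ω} {ι : Type*} [Fintype ι]
  {X : ι → Ω → ℝ}

lemma memLp_quadForm (h4 : ∀ i, MemLp (X i) 4 P) (A : Matrix ι ι ℝ) :
    MemLp (fun ω => ∑ i, ∑ j, A i j * (X i ω * X j ω)) 2 P :=
  memLp_finsetSum _ fun i _ => memLp_finsetSum _ fun j _ => ((h4 j).mul' (h4 i)).const_mul _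

lemma integral_quadForm (h2 : ∀ i, MemLp (X i) 2 P) (A : Matrix ι ι ℝ) :
    ∫ ω, ∑ i, ∑ j, A i j * (X i ω * X j ω) ∂P
      = ∑ i, ∑ j, A i j * ∫ ω, X i ω * X j ω ∂P := by
  have hint : ∀ i j, Integrable (fun ω => X i ω * X j ω) P :=
    fun i j => (h2 i).integrable_mul (h2 j)
  rw [integral_finsetSum _ fun i _ => by fun_prop]
  refine Finset.sum_congr rfl fun i _ => ?_
  rw [integral_finsetSum _ fun j _ => by fun_prop]
  exact Finset.sum_congr rfl fun j _ => integral_const_mul _ _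

lemma integral_quadForm_sq (h4 : ∀ i, MemLp (X i) 4 P) (A : Matrix ι ι ℝ) :
    ∫ ω, (∑ i, ∑ j, A i j * (X i ω * X j ω)) ^ 2 ∂P
      = ∑ i, ∑ j, ∑ k, ∑ l, A i j * A k l * ∫ ω, X i ω * X j ω * (X k ω * X l ω) ∂P := by
  have hint : ∀ i j k l, Integrable (fun ω => X i ω * X j ω * (X k ω * X l ω)) P :=
    fun i j k l => MemLp.integrable_mul (p := 2) (q := 2) ((h4 j).mul' (h4 i)) ((h4 l).mul' (h4 k))
  have hexpand : ∀ ω, (∑ i, ∑ j, A i j * (X i ω * X j ω)) ^ 2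
      = ∑ i, ∑ j, ∑ k, ∑ l, A i j * A k l * (X i ω * X j ω * (X k ω * X l ω)) := by
    intro ω
    simp only [sq, Finset.sum_mul, Finset.mul_sum]
    refine Finset.sum_congr rfl fun i _ => Finset.sum_congr rfl fun j _ =>
      Finset.sum_congr rfl fun k _ => Finset.sum_congr rfl fun l _ => by ring
  simp_rw [hexpand]
  rw [integral_finsetSum _ fun i _ => by fun_prop]
  refine Finset.sum_congr rfl fun i _ => ?_
  rw [integral_finsetSum _ fun j _ => by fun_prop]
  refine Finset.sum_congr rfl fun j _ => ?_
  rw [integral_finsetSum _ fun k _ => by fun_prop]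
  refine Finset.sum_congr rfl fun k _ => ?_
  rw [integral_finsetSum _ fun l _ => by fun_prop]
  exact Finset.sum_congr rfl fun l _ => integral_const_mul _ _

end QuadraticForm

theorem stmt6_general {Ω : Type*} [MeasurableSpace Ω] (P : Measure Ω) [IsProbabilityMeasure P]
    {p : ℕ} (G : SimpleGraph (Fin p)) (X : Fin p → Ω → ℝ)
    (hdep : GraphDependent P G X)
    (h4 : ∀ i, MemLp (X i) 4 P)
    (h0 : ∀ i, ∫ ω, X i ω ∂P = 0)
    (S A : Matrix (Fin p) (Fin p) ℝ)
    (hS : ∀ i j, S i j = ∫ ω, X i ω * X j ω ∂P)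
    (hA : A.IsSymm)
    (hA0 : ∀ i j, G.edist i j ≤ 2 → A i j = 0) :
    variance (fun ω => (fun i => X i ω) ⬝ᵥ A.mulVec (fun i => X i ω)) P
      ≤ 2 * specNorm A ^ 2 * Matrix.trace (S ^ 2) := by
  have hX : ∀ i, AEStronglyMeasurable (X i) P := fun i => (h4 i).aestronglyMeasurable
  have h2 : ∀ i, MemLp (X i) 2 P := fun i => (h4 i).mono_exponent (by norm_num)
  have hSsymm : S.IsSymm := Matrix.IsSymm.ext fun i j => by simp only [hS, mul_comm]
  have hfar : ∀ {i j}, A i j ≠ 0 → 2 < G.edist i j := fun h => lt_of_not_ge (mt (hA0 _ _) h)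
  have hmean : ∫ ω, ∑ i, ∑ j, A i j * (X i ω * X j ω) ∂P = 0 := by
    rw [integral_quadForm h2]
    refine Finset.sum_eq_zero fun i _ => Finset.sum_eq_zero fun j _ => ?_
    by_cases hij : A i j = 0
    · rw [hij, zero_mul]
    · rw [hdep.integral_mul_eq_zero hX h0 (one_le_two.trans_lt (hfar hij)), mul_zero]
  have hsecond : ∫ ω, (∑ i, ∑ j, A i j * (X i ω * X j ω)) ^ 2 ∂P = 2 * trace ((A * S) ^ 2) := by
    rw [integral_quadForm_sq h4, ← hA.sum_mul_mul_add_mul_eq_two_trace hSsymm]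
    refine Finset.sum_congr rfl fun i _ => Finset.sum_congr rfl fun j _ =>
      Finset.sum_congr rfl fun k _ => Finset.sum_congr rfl fun l _ => ?_
    by_cases hijkl : A i j * A k l = 0
    · rw [hijkl, zero_mul, zero_mul]
    · rw [hdep.fourth_moment_eq hX h0 (hfar (left_ne_zero_of_mul hijkl))
        (hfar (right_ne_zero_of_mul hijkl)), hS, hS, hS, hS]
  simp only [Matrix.dotProduct_mulVec_self_eq_sum]
  rw [variance_eq_sub (memLp_quadForm h4 A)]
  simp only [Pi.pow_apply]
  rw [hsecond, hmean, sq 0, mul_zero, sub_zero, mul_assoc]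
  exact mul_le_mul_of_nonneg_left (Matrix.trace_sq_mul_le_specNorm_sq A hSsymm) zero_le_two

theorem stmt6 {Ω : Type*} [MeasurableSpace Ω] (P : Measure Ω) [IsProbabilityMeasure P]
    {p : ℕ} (G : SimpleGraph (Fin p)) (X : Fin p → Ω → ℝ)
    (hdep : GraphDependent P G X)
    (hmeas : ∀ i, Measurable (X i))
    (h4 : ∀ i, MemLp (X i) 4 P)
    (h0 : ∀ i, ∫ ω, X i ω ∂P = 0)
    (S A : Matrix (Fin p) (Fin p) ℝ)
    (hS : ∀ i j, S i j = ∫ ω, X i ω * X j ω ∂P)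
    (hA : A.IsSymm)
    (hA0 : ∀ i j, G.edist i j ≤ 2 → A i j = 0) :
    variance (fun ω => (fun i => X i ω) ⬝ᵥ A.mulVec (fun i => X i ω)) P
      ≤ 2 * specNorm A ^ 2 * Matrix.trace (S ^ 2) :=
  stmt6_general P G X hdep h4 h0 S A hS hA hA0
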